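/- Let w be a scalar with |w| > 1 and A_w the unbounded weighted backward shift in X, A_w x = (w^k x_{k+1})_{k∈ℕ}, with maximal domain. Then every λ in the scalar field is an eigenvalue of A_w of geometric multiplicity 1: the kernel of A_w − λI is one-dimensional, spanned by the sequence y with y_k = (λ / w^{k/2})^{k-1}. -/
import Mathlib


open Filter Topology

/-- Membership in the complex space `X` (0-based: `x k` is the paper's
`x_{k+1}`). -/
def MemXC (x : ℕ → ℂ) : Prop :=
  Summable (fun k : ℕ => ‖x (k + 1) / ((k : ℂ) + 2) - x k / ((k : ℂ) + 1)‖) ∧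
  Tendsto (fun k : ℕ => x k / ((k : ℂ) + 1)) atTop (𝓝 0)

/-- The eigenvector `y_k = λ^{k-1} / w^{k(k-1)/2} = (λ/w^{k/2})^{k-1}`
(0-based: `y k = λ^k / w^{(k+1)k/2}`). -/
noncomputable def eigvec (w l : ℂ) : ℕ → ℂ :=
  fun k => l ^ k / w ^ ((k + 1) * k / 2)

lemma eig_rec (w l : ℂ) (hw : w ≠ 0) (k : ℕ) :
    w ^ (k + 1) * eigvec w l (k + 1) = l * eigvec w l k := by
  unfold eigvec
  have h : (k + 1 + 1) * (k + 1) / 2 = (k + 1) * k / 2 + (k + 1) := by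
    have h1 : (k + 1 + 1) * (k + 1) = (k + 1) * k + 2 * (k + 1) := by ring
    rw [h1, Nat.add_mul_div_left _ _ (by norm_num : 0 < 2)]
  rw [h, pow_add]
  have h2 : w ^ ((k + 1) * k / 2) ≠ 0 := pow_ne_zero _ hw
  have h3 : w ^ (k + 1) ≠ 0 := pow_ne_zero _ hw
  field_simp
  ring

lemma eig_succ (w l : ℂ) (hw : w ≠ 0) (k : ℕ) :
    eigvec w l (k + 1) = l * eigvec w l k / w ^ (k + 1) := by
  rw [eq_div_iff (pow_ne_zero _ hw), mul_comm, eig_rec w l hw k]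

lemma memXC_smul (c : ℂ) (x : ℕ → ℂ) (hx : MemXC x) : MemXC (fun k => c * x k) := by
  constructor
  · have := hx.1.mul_left ‖c‖
    refine this.congr fun k => ?_
    simp [mul_div_assoc, ← mul_sub, norm_mul]
  · have := hx.2.const_mul c
    simpa [mul_div_assoc] using this

lemma eig_norm_summable (w : ℂ) (hw : 1 < ‖w‖) (l : ℂ) :
    Summable (fun k => ‖eigvec w l k‖) := by
  have hw0 : w ≠ 0 := by
    intro h; rw [h] at hw; simp at hw; linarith
  apply summable_of_ratio_norm_eventually_le (r := 1/2) (by norm_num)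
  have h1 : Tendsto (fun k : ℕ => ‖w‖ ^ k) atTop atTop :=
    tendsto_pow_atTop_atTop_of_one_lt hw
  filter_upwards [h1.eventually_ge_atTop (2 * ‖l‖)] with k hk
  have hwk : (2 : ℝ) * ‖l‖ ≤ ‖w‖ ^ (k + 1) := by
    calc (2:ℝ) * ‖l‖ ≤ ‖w‖ ^ k := hk
    _ ≤ ‖w‖ ^ (k + 1) := pow_le_pow_right₀ (le_of_lt hw) (Nat.le_succ k)
  have hpos : (0:ℝ) < ‖w‖ ^ (k + 1) := pow_pos (by linarith) _
  rw [Real.norm_eq_abs, Real.norm_eq_abs, abs_norm, abs_norm,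
    eig_succ w l hw0 k, norm_div, norm_mul, norm_pow]
  rw [div_le_iff₀ hpos]
  calc ‖l‖ * ‖eigvec w l k‖ ≤ (‖w‖ ^ (k+1) / 2) * ‖eigvec w l k‖ := by
        apply mul_le_mul_of_nonneg_right _ (norm_nonneg _)
        linarith
    _ = 1 / 2 * ‖eigvec w l k‖ * ‖w‖ ^ (k + 1) := by ring

lemma memXC_eigvec (w : ℂ) (hw : 1 < ‖w‖) (l : ℂ) : MemXC (eigvec w l) := by
  have hs := eig_norm_summable w hw l
  have hbound : ∀ k : ℕ, ‖eigvec w l k / ((k : ℂ) + 1)‖ ≤ ‖eigvec w l k‖ := by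
    intro k
    rw [norm_div]
    have h1 : (1:ℝ) ≤ ‖((k : ℂ) + 1)‖ := by
      have : ((k : ℂ) + 1) = ((k + 1 : ℕ) : ℂ) := by push_cast; ring
      rw [this, Complex.norm_natCast]
      exact_mod_cast Nat.one_le_iff_ne_zero.mpr (Nat.succ_ne_zero k)
    calc ‖eigvec w l k‖ / ‖((k : ℂ) + 1)‖ ≤ ‖eigvec w l k‖ / 1 :=
          div_le_div_of_nonneg_left (norm_nonneg _) one_pos h1
      _ = ‖eigvec w l k‖ := div_one _
  have hsa : Summable (fun k : ℕ => ‖eigvec w l k / ((k : ℂ) + 1)‖) :=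
    hs.of_nonneg_of_le (fun k => norm_nonneg _) hbound
  constructor
  · have hshift : Summable (fun k : ℕ => ‖eigvec w l (k + 1) / ((k : ℂ) + 2)‖) := by
      have := (summable_nat_add_iff 1).mpr hsa
      refine this.congr fun k => ?_
      push_cast
      ring_nf
    exact Summable.of_nonneg_of_le (fun k => norm_nonneg _)
      (fun k => norm_sub_le _ _) (hshift.add hsa)
  · exact squeeze_zero_norm hbound hs.tendsto_atTop_zero

/-- For `|w| > 1`, every `λ ∈ ℂ` is an eigenvalue of the unbounded weighted
backward shift `A_w x = (w^k x_{k+1})` (with maximal domain in `X`) of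
geometric multiplicity `1`: `y = (λ^{k-1}/w^{k(k-1)/2})` lies in the domain,
is nonzero, satisfies `A_w y = λ y`, and spans `ker (A_w - λ I)`. -/
theorem stmt_18 (w : ℂ) (hw : 1 < ‖w‖) (l : ℂ) :
    MemXC (eigvec w l) ∧
    MemXC (fun k => w ^ (k + 1) * eigvec w l (k + 1)) ∧
    (∀ k : ℕ, w ^ (k + 1) * eigvec w l (k + 1) = l * eigvec w l k) ∧
    eigvec w l ≠ 0 ∧
    (∀ x : ℕ → ℂ, MemXC x → MemXC (fun k => w ^ (k + 1) * x (k + 1)) →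
      (∀ k : ℕ, w ^ (k + 1) * x (k + 1) = l * x k) →
      ∃ c : ℂ, x = fun k => c * eigvec w l k) := by
  have hw0 : w ≠ 0 := by
    intro h; rw [h] at hw; simp at hw; linarith
  have hrec := eig_rec w l hw0
  refine ⟨memXC_eigvec w hw l, ?_, hrec, ?_, ?_⟩
  · have : (fun k => w ^ (k + 1) * eigvec w l (k + 1)) = fun k => l * eigvec w l k := by
      funext k; exact hrec k
    rw [this]
    exact memXC_smul l _ (memXC_eigvec w hw l)
  · intro h
    have h0 : eigvec w l 0 = 1 := by simp [eigvec]
    rw [h] at h0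
    simp at h0
  · intro x _ _ hx
    refine ⟨x 0, funext fun k => ?_⟩
    induction k with
    | zero => simp [eigvec]
    | succ k ih =>
      have h1 : x (k + 1) = l * x k / w ^ (k + 1) := by
        rw [eq_div_iff (pow_ne_zero _ hw0), mul_comm, hx k]
      rw [h1, ih, eig_succ w l hw0 k]
      ring
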